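/- Define R = {(s,t) : for all positive formulae φ ∈ L^+, s ⊨ φ implies t ⊨ φ}, where positive formulae are φ ::= ⊤ | ⋀_{j∈J} φ_j | ⟨a⟩ψ and ψ ::= ⊕_{i∈I} r_i φ_i. Then R is a probabilistic simulation; consequently, if s and t satisfy logical inclusion on L^+ then s ⊑ t (s is probabilistically simulated by t). -/

import Mathlib

/-! For a state `u`, let `χ_u` be the conjunction, over all states `v`, of a positive formula
that `u` satisfies and `v` does not (or `⊤` if there is none); since `T` is countable this is a
formula of `L^+`, and the states satisfying it are exactly those logically including `u`.
If `s →a π` and `t` logically includes `s`, then `t` satisfies `⟨a⟩ ⊕_{u ∈ supp π} π(u) χ_u`.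
The transition `t →a π'` witnessing this comes with a decomposition `π' = ∑_u π(u) ρ_u` where
every `ρ_u` is supported on states satisfying `χ_u`, i.e. logically including `u`; pairing `u`
with `v` at weight `π(u) ρ_u(v)` lifts logical inclusion to `π` and `π'`. -/

open scoped ENNReal Classical

/-- The Dirac distribution at `t`. -/
noncomputable def dirac {T : Type*} (t : T) : T → ℝ≥0∞ :=
  fun s => if s = t then 1 else 0

/-- The lifting of a relation `R ⊆ T × T` to probability distributions on `T`. -/
def Lift {T : Type*} (R : T → T → Prop) (π π' : T → ℝ≥0∞) : Prop :=
  ∃ (I : Type) (_ : Countable I) (p : I → ℝ≥0∞) (s t : I → T),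
    (∀ i, 0 < p i ∧ p i ≤ 1) ∧ (∑' i, p i = 1) ∧ (∀ i, R (s i) (t i)) ∧
    (∀ u, π u = ∑' i, p i * dirac (s i) u) ∧
    (∀ u, π' u = ∑' i, p i * dirac (t i) u)

/-- A nondeterministic probabilistic labeled transition system (PTS). -/
structure PTS (T : Type*) (Act : Type*) where
  trans : T → Act → (T → ℝ≥0∞) → Prop
  trans_isDist : ∀ t a π, trans t a π → ∑' s, π s = 1

/-- `R` is a probabilistic simulation. -/
def IsSimulation {T Act : Type*} (P : PTS T Act) (R : T → T → Prop) : Prop :=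
  ∀ s t : T, R s t → ∀ (a : Act) (πs : T → ℝ≥0∞), P.trans s a πs →
    ∃ πt : T → ℝ≥0∞, P.trans t a πt ∧ Lift R πs πt


/-- Probabilistic similarity: the union of all probabilistic simulations. -/
def Sim {T Act : Type*} (P : PTS T Act) (s t : T) : Prop :=
  ∃ R : T → T → Prop, IsSimulation P R ∧ R s t

/-- Positive formulae of the logic `L^+`: state formulae (index `true`) are
`⊤ | ⋀_{j∈J} φ_j | ⟨a⟩ψ`, distribution formulae (index `false`) are `⊕_{i∈I} r_i φ_i`
with `r_i ∈ (0,1]` summing to `1`; index sets are at most countable and nonempty. -/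
inductive PF (Act : Type) : Bool → Type 1 where
  | top : PF Act true
  | conj (J : Type) (hC : Countable J) (hN : Nonempty J) (φs : J → PF Act true) : PF Act true
  | diam (a : Act) (ψ : PF Act false) : PF Act true
  | osum (I : Type) (hC : Countable I) (hN : Nonempty I) (r : I → ℝ≥0∞)
      (hr : ∀ i, 0 < r i ∧ r i ≤ 1) (hsum : ∑' i, r i = 1)
      (φs : I → PF Act true) : PF Act false

/-- Semantic domain: state formulae denote sets of states, distribution formulae denote
sets of distributions. -/
abbrev SemTy (T : Type*) : Bool → Type _
  | true => Set T
  | false => Set (T → ℝ≥0∞)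

/-- Satisfaction semantics of `L^+`. -/
noncomputable def sem {T : Type*} {Act : Type} (P : PTS T Act) :
    {b : Bool} → PF Act b → SemTy T b
  | _, PF.top => (Set.univ : Set T)
  | _, PF.conj _ _ _ φs => ⋂ j, sem P (φs j)
  | _, PF.diam a ψ => {t : T | ∃ π, P.trans t a π ∧ π ∈ sem P ψ}
  | _, PF.osum I _ _ r _ _ φs =>
      {π : T → ℝ≥0∞ | ∃ πs : I → T → ℝ≥0∞,
        (∀ i, ∑' t, πs i t = 1) ∧
        (∀ u, π u = ∑' i, r i * πs i u) ∧
        (∀ i, ∀ t : T, πs i t ≠ 0 → t ∈ sem P (φs i))}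

section Lifting
variable {T : Type*}

lemma tsum_mul_dirac (f : T → ℝ≥0∞) (w : T) : ∑' u, f u * dirac u w = f w := by
  rw [tsum_eq_single w fun u hu => by simp [dirac, Ne.symm hu]]
  simp [dirac]

lemma tsum_dirac (v : T) : ∑' u, dirac v u = 1 := by
  rw [tsum_eq_single v fun u hu => by simp [dirac, hu]]
  simp [dirac]

/-- `Lift` demands positive weights; restricting to the support of `p` provides them. -/
lemma lift_of_weights {K : Type} [Countable K] {R : T → T → Prop} {π π' : T → ℝ≥0∞}
    (p : K → ℝ≥0∞) (s t : K → T) (hp : ∑' k, p k = 1) (hR : ∀ k, p k ≠ 0 → R (s k) (t k))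
    (hπ : ∀ u, π u = ∑' k, p k * dirac (s k) u)
    (hπ' : ∀ u, π' u = ∑' k, p k * dirac (t k) u) :
    Lift R π π' := by
  have tsum_support (f : K → ℝ≥0∞) :
      ∑' k : Function.support p, p k * f k = ∑' k, p k * f k :=
    tsum_subtype_eq_of_support_subset (f := fun k => p k * f k) fun _ hk => left_ne_zero_of_mul hk
  refine ⟨Function.support p, inferInstance, fun k => p k, fun k => s k, fun k => t k,
    fun k => ⟨pos_iff_ne_zero.2 k.2, hp ▸ ENNReal.le_tsum _⟩,
    (tsum_subtype_support p).trans hp, fun k => hR k k.2,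
    fun u => (hπ u).trans (tsum_support _).symm, fun u => (hπ' u).trans (tsum_support _).symm⟩

instance [Countable T] : Countable (Shrink.{0} T) :=
  Countable.of_equiv T (equivShrink.{0} T)

/-- The lifting pairs `d i` with `v` at weight `r i * ρ i v`. -/
lemma lift_of_decomposition [Countable T] {I : Type} [Countable I] {R : T → T → Prop}
    {π π' : T → ℝ≥0∞} (r : I → ℝ≥0∞) (d : I → T) (ρ : I → T → ℝ≥0∞)
    (hr : ∑' i, r i = 1) (hρ : ∀ i, ∑' v, ρ i v = 1) (hR : ∀ i v, ρ i v ≠ 0 → R (d i) v)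
    (hπ : ∀ u, π u = ∑' i, r i * dirac (d i) u) (hπ' : ∀ u, π' u = ∑' i, r i * ρ i u) :
    Lift R π π' := by
  set e := (equivShrink.{0} T).symm
  have tsum_weights (g : I → T → ℝ≥0∞) :
      ∑' k : I × Shrink.{0} T, r k.1 * ρ k.1 (e k.2) * g k.1 (e k.2) =
        ∑' i, r i * ∑' v, ρ i v * g i v := by
    rw [ENNReal.tsum_prod (f := fun i j => r i * ρ i (e j) * g i (e j))]
    refine tsum_congr fun i => ?_
    simp_rw [mul_assoc, ENNReal.tsum_mul_left]
    rw [e.tsum_eq (fun v => ρ i v * g i v)]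
  have tsum_ρ_mul (i : I) (c : ℝ≥0∞) : ∑' v, ρ i v * c = c := by
    rw [ENNReal.tsum_mul_right, hρ i, one_mul]
  refine lift_of_weights (fun k : I × Shrink.{0} T => r k.1 * ρ k.1 (e k.2)) (fun k => d k.1)
    (fun k => e k.2) ?_ (fun k hk => hR _ _ (right_ne_zero_of_mul hk)) (fun u => ?_) (fun u => ?_)
  · simpa [hρ, hr] using tsum_weights fun _ _ => 1
  · rw [tsum_weights fun i _ => dirac (d i) u, hπ u]
    simp_rw [tsum_ρ_mul]
  · rw [tsum_weights fun _ v => dirac v u, hπ' u]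
    simp_rw [tsum_mul_dirac]

end Lifting

section Support
variable {T : Type*} [Countable T]

/-- The support of `π`, reindexed in `Type` so that it can index a formula of `L^+`. -/
abbrev SuppIdx (π : T → ℝ≥0∞) : Type :=
  Function.support (π ∘ (equivShrink.{0} T).symm)

noncomputable def SuppIdx.state {π : T → ℝ≥0∞} (x : SuppIdx π) : T :=
  (equivShrink.{0} T).symm x

lemma tsum_suppIdx {π : T → ℝ≥0∞} (f : T → ℝ≥0∞) (hf : ∀ u, π u = 0 → f u = 0) :
    ∑' x : SuppIdx π, f x.state = ∑' u, f u :=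
  (tsum_subtype_eq_of_support_subset (f := f ∘ (equivShrink.{0} T).symm)
    fun _ hx h => hx (hf _ h)).trans ((equivShrink.{0} T).symm.tsum_eq f)

lemma eq_tsum_suppIdx_mul_dirac (π : T → ℝ≥0∞) (u : T) :
    π u = ∑' x : SuppIdx π, π x.state * dirac x.state u := by
  rw [tsum_suppIdx (fun v => π v * dirac v u) fun v h => by rw [h, zero_mul], tsum_mul_dirac]

lemma nonempty_suppIdx {π : T → ℝ≥0∞} (hπ : ∑' u, π u = 1) : Nonempty (SuppIdx π) := by
  by_contra h
  rw [not_nonempty_iff] at h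
  rw [← tsum_suppIdx π fun _ h => h, tsum_empty] at hπ
  exact zero_ne_one hπ

end Support

section Characteristic
variable {T : Type*} {Act : Type}

def LogicalInclusion (P : PTS T Act) (s t : T) : Prop :=
  ∀ φ : PF Act true, s ∈ sem P φ → t ∈ sem P φ

noncomputable def separator (P : PTS T Act) (u v : T) : PF Act true :=
  if h : ∃ φ : PF Act true, u ∈ sem P φ ∧ v ∉ sem P φ then h.choose else PF.top

lemma mem_sem_separator_self (P : PTS T Act) (u v : T) : u ∈ sem P (separator P u v) := by
  unfold separator
  split_ifs with h
  · exact h.choose_spec.1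
  · trivial

lemma logicalInclusion_of_mem_sem_separator (P : PTS T Act) {u v : T}
    (hv : v ∈ sem P (separator P u v)) : LogicalInclusion P u v := by
  by_contra h
  have h' : ∃ φ : PF Act true, u ∈ sem P φ ∧ v ∉ sem P φ := by
    simpa [LogicalInclusion] using h
  rw [separator, dif_pos h'] at hv
  exact h'.choose_spec.2 hv

variable [Countable T]

noncomputable def charFormula (P : PTS T Act) (u : T) : PF Act true :=
  PF.conj (Shrink.{0} T) inferInstance ⟨equivShrink.{0} T u⟩
    fun j => separator P u ((equivShrink.{0} T).symm j)

lemma mem_sem_charFormula_self (P : PTS T Act) (u : T) : u ∈ sem P (charFormula P u) :=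
  Set.mem_iInter.2 fun _ => mem_sem_separator_self P u _

lemma logicalInclusion_of_mem_sem_charFormula (P : PTS T Act) {u v : T}
    (hv : v ∈ sem P (charFormula P u)) : LogicalInclusion P u v := by
  have hsep := Set.mem_iInter.1 hv (equivShrink.{0} T v)
  simp only [Equiv.symm_apply_apply] at hsep
  exact logicalInclusion_of_mem_sem_separator P hsep

noncomputable def charDistFormula (P : PTS T Act) (π : T → ℝ≥0∞) (hπ : ∑' u, π u = 1) :
    PF Act false :=
  PF.osum (SuppIdx π) inferInstance (nonempty_suppIdx hπ) (fun x => π x.state)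
    (fun x => ⟨pos_iff_ne_zero.2 x.2, hπ ▸ ENNReal.le_tsum _⟩)
    ((tsum_suppIdx π fun _ h => h).trans hπ) fun x => charFormula P x.state

lemma mem_sem_charDistFormula_self (P : PTS T Act) {π : T → ℝ≥0∞} (hπ : ∑' u, π u = 1) :
    π ∈ sem P (charDistFormula P π hπ) := by
  refine ⟨fun x => dirac x.state, fun x => tsum_dirac _, eq_tsum_suppIdx_mul_dirac π,
    fun x v hv => ?_⟩
  obtain rfl : v = x.state := by
    by_contra hne
    exact hv (if_neg hne)
  exact mem_sem_charFormula_self P _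

lemma lift_of_mem_sem_charDistFormula (P : PTS T Act) {π π' : T → ℝ≥0∞}
    (hπ : ∑' u, π u = 1) (hπ' : π' ∈ sem P (charDistFormula P π hπ)) :
    Lift (LogicalInclusion P) π π' := by
  obtain ⟨ρ, hρ, hπ'ρ, hsupp⟩ := hπ'
  exact lift_of_decomposition (fun x => π x.state) (fun x => x.state) ρ
    ((tsum_suppIdx π fun _ h => h).trans hπ) hρ
    (fun x v hv => logicalInclusion_of_mem_sem_charFormula P (hsupp x v hv))
    (eq_tsum_suppIdx_mul_dirac π) hπ'ρ

theorem isSimulation_logicalInclusion (P : PTS T Act) : IsSimulation P (LogicalInclusion P) := by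
  intro s t hst a πs hs
  have hπs := P.trans_isDist s a πs hs
  obtain ⟨πt, ht, hψ⟩ :=
    hst (PF.diam a (charDistFormula P πs hπs)) ⟨πs, hs, mem_sem_charDistFormula_self P hπs⟩
  exact ⟨πt, ht, lift_of_mem_sem_charDistFormula P hπs hψ⟩

end Characteristic

theorem positive_logic_inclusion_is_simulation_general {T : Type*} {Act : Type} [Countable T]
    (P : PTS T Act) :
    IsSimulation P (fun s t => ∀ φ : PF Act true, s ∈ sem P φ → t ∈ sem P φ) ∧
    ∀ s t : T, (∀ φ : PF Act true, s ∈ sem P φ → t ∈ sem P φ) → Sim P s t :=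
  ⟨isSimulation_logicalInclusion P, fun _ _ h => ⟨_, isSimulation_logicalInclusion P, h⟩⟩

/-- The relation `R = {(s,t) : ∀ φ ∈ L^+, s ⊨ φ → t ⊨ φ}` is a probabilistic simulation;
consequently logical inclusion on `L^+` implies probabilistic similarity. -/
theorem positive_logic_inclusion_is_simulation {T : Type*} {Act : Type} [Countable T]
    (P : PTS T Act) (himg : ∀ (t : T) (a : Act), Set.Finite {π : T → ℝ≥0∞ | P.trans t a π}) :
    IsSimulation P (fun s t => ∀ φ : PF Act true, s ∈ sem P φ → t ∈ sem P φ) ∧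
    ∀ s t : T, (∀ φ : PF Act true, s ∈ sem P φ → t ∈ sem P φ) → Sim P s t :=
  positive_logic_inclusion_is_simulation_general P
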